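/- Assume F is continuous with F(0) = 0 and satisfies (H1′): there exist ε with 0 < ε < 4/N and s₁ > 0 such that F(s) − ½s² ≤ −s^{2+ε} for all 0 ≤ s ≤ s₁. Then for every ρ > 0 there exists a nonnegative, Lipschitz, compactly supported function u : ℝᴺ → ℝ with ∫_{ℝᴺ} u² dx = ρ and J(u) := ∫_{ℝᴺ} (½|∇u|² + F(u) − ½u²) dx < 0. -/

import Mathlib

/-!
Take `u = t φ_R`, where the plateau `φ_R` equals `1` on the ball of radius `R`, vanishes outside
the ball of radius `2R` and has `|∇φ_R| ≤ 1/R`. The mass constraint forces `t² ≍ ρ / R^N`, so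
`t → 0` as `R → ∞` and (H1′) applies: the potential part of `J` is at most `-t^{2+ε} |B_R|`,
while the gradient part is at most `½ (t/R)² |B_{2R}|`. Their ratio is of order
`2^N / (t^ε R²) ≍ R^{Nε/2 - 2}`, which tends to `0` because `Nε < 4`.
-/

open MeasureTheory

noncomputable section

open Metric Set Filter Module
open scoped NNReal ENNReal Topology

theorem integral_le_mul_measureReal_of_le_of_nonpos {X : Type*} [MeasurableSpace X]
    {μ : Measure X} {f : X → ℝ} {s : Set X} {a : ℝ} (hf : Integrable f μ)
    (hs : MeasurableSet s) (hμs : μ s ≠ ∞) (h_on : ∀ x ∈ s, f x ≤ a)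
    (h_off : ∀ x ∉ s, f x ≤ 0) :
    ∫ x, f x ∂μ ≤ a * μ.real s := by
  have h_ind : ∀ x, f x ≤ s.indicator (fun _ ↦ a) x := fun x ↦ by
    by_cases hx : x ∈ s
    · simpa [indicator_of_mem hx] using h_on x hx
    · simpa [indicator_of_notMem hx] using h_off x hx
  calc ∫ x, f x ∂μ ≤ ∫ x, s.indicator (fun _ ↦ a) x ∂μ :=
        integral_mono hf ((integrable_indicator_iff hs).2 (integrableOn_const hμs)) h_ind
    _ = a * μ.real s := by rw [integral_indicator_const a hs, smul_eq_mul, mul_comm]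

theorem integrable_comp_of_hasCompactSupport {X : Type*} [TopologicalSpace X]
    [MeasurableSpace X] [OpensMeasurableSpace X] {μ : Measure X} [IsFiniteMeasureOnCompacts μ]
    {u : X → ℝ} {G : ℝ → ℝ} (hG : Continuous G) (hG0 : G 0 = 0) (hu : Continuous u)
    (hcs : HasCompactSupport u) : Integrable (fun x ↦ G (u x)) μ :=
  (hG.comp hu).integrable_of_hasCompactSupport (hcs.comp_left hG0)

theorem measureReal_ball_pos {X : Type*} [PseudoMetricSpace X] [ProperSpace X]
    [MeasurableSpace X] (μ : Measure X) [μ.IsOpenPosMeasure] [IsFiniteMeasureOnCompacts μ]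
    (x : X) {r : ℝ} (hr : 0 < r) : 0 < μ.real (ball x r) :=
  ENNReal.toReal_pos (measure_ball_pos μ x hr).ne' measure_ball_lt_top.ne

section Gradient

variable {E : Type*} [NormedAddCommGroup E] [InnerProductSpace ℝ E] [CompleteSpace E]
  {u : E → ℝ} {K : ℝ≥0}

theorem norm_gradient_eq_norm_fderiv (u : E → ℝ) (x : E) :
    ‖gradient u x‖ = ‖fderiv ℝ u x‖ :=
  (InnerProductSpace.toDual ℝ E).symm.norm_map _

theorem LipschitzWith.norm_gradient_le (hu : LipschitzWith K u) (x : E) :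
    ‖gradient u x‖ ≤ K :=
  norm_gradient_eq_norm_fderiv u x ▸ norm_fderiv_le_of_lipschitz ℝ hu

theorem gradient_of_notMem_tsupport {x : E} (hx : x ∉ tsupport u) : gradient u x = 0 := by
  simp [gradient, fderiv_of_notMem_tsupport ℝ hx]

variable [MeasurableSpace E] [BorelSpace E] {μ : Measure E}
  [IsFiniteMeasureOnCompacts μ]

theorem LipschitzWith.integrable_norm_gradient_sq (hu : LipschitzWith K u)
    (hcs : HasCompactSupport u) : Integrable (fun x ↦ ‖gradient u x‖ ^ 2) μ := by
  have h_meas : Measurable (fun x ↦ ‖gradient u x‖ ^ 2) := by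
    simp_rw [norm_gradient_eq_norm_fderiv]
    exact (measurable_fderiv ℝ u).norm.pow_const 2
  refine IntegrableOn.integrable_of_forall_notMem_eq_zero (s := tsupport u) ?_ fun x hx ↦ by
    simp [gradient_of_notMem_tsupport hx]
  refine .of_bound hcs.isCompact.measure_lt_top h_meas.aestronglyMeasurable (K ^ 2) ?_
  refine Eventually.of_forall fun x ↦ ?_
  rw [norm_pow, norm_norm]
  exact pow_le_pow_left₀ (norm_nonneg _) (hu.norm_gradient_le x) 2

theorem LipschitzWith.integral_norm_gradient_sq_le (hu : LipschitzWith K u)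
    (hcs : HasCompactSupport u) :
    ∫ x, ‖gradient u x‖ ^ 2 ∂μ ≤ K ^ 2 * μ.real (tsupport u) :=
  integral_le_mul_measureReal_of_le_of_nonpos (hu.integrable_norm_gradient_sq hcs)
    (isClosed_tsupport u).measurableSet hcs.isCompact.measure_lt_top.ne
    (fun x _ ↦ pow_le_pow_left₀ (norm_nonneg _) (hu.norm_gradient_le x) 2)
    (fun x hx ↦ by simp [gradient_of_notMem_tsupport hx])

end Gradient

section Plateau

variable {E : Type*} [NormedAddCommGroup E] {R : ℝ}

def plateau (R : ℝ) (x : E) : ℝ := max 0 (min 1 (2 - ‖x‖ / R))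

theorem plateau_nonneg (R : ℝ) (x : E) : 0 ≤ plateau R x := le_max_left _ _

theorem plateau_le_one (R : ℝ) (x : E) : plateau R x ≤ 1 :=
  max_le zero_le_one (min_le_left _ _)

theorem plateau_of_norm_le (hR : 0 < R) {x : E} (hx : ‖x‖ ≤ R) : plateau R x = 1 := by
  have : ‖x‖ / R ≤ 1 := (div_le_one hR).2 hx
  rw [plateau, min_eq_left (by linarith), max_eq_right zero_le_one]

theorem plateau_of_le_norm (hR : 0 < R) {x : E} (hx : 2 * R ≤ ‖x‖) : plateau R x = 0 := by
  have : 2 ≤ ‖x‖ / R := (le_div_iff₀ hR).2 hx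
  rw [plateau, min_eq_right (by linarith), max_eq_left (by linarith)]

theorem lipschitzWith_plateau (R : ℝ) : LipschitzWith ‖R⁻¹‖₊ (plateau R : E → ℝ) := by
  have h_affine : LipschitzWith ‖R⁻¹‖₊ (fun s : ℝ ↦ 2 - s / R) := by
    refine LipschitzWith.of_dist_le_mul fun a b ↦ ?_
    rw [Real.dist_eq, Real.dist_eq, coe_nnnorm, Real.norm_eq_abs,
      show 2 - a / R - (2 - b / R) = R⁻¹ * (b - a) by ring, abs_mul, abs_sub_comm]
  rw [← mul_one ‖R⁻¹‖₊]
  exact ((h_affine.const_min 1).const_max 0).comp lipschitzWith_one_norm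

theorem tsupport_plateau_subset (hR : 0 < R) :
    tsupport (plateau R : E → ℝ) ⊆ closedBall 0 (2 * R) := by
  refine closure_minimal (fun x hx ↦ ?_) isClosed_closedBall
  rw [mem_closedBall, dist_zero_right]
  by_contra! h
  exact hx (plateau_of_le_norm hR h.le)

theorem hasCompactSupport_plateau [ProperSpace E] (hR : 0 < R) :
    HasCompactSupport (plateau R : E → ℝ) :=
  (isCompact_closedBall 0 (2 * R)).of_isClosed_subset (isClosed_tsupport _)
    (tsupport_plateau_subset hR)

variable [MeasurableSpace E] [BorelSpace E] [ProperSpace E] (μ : Measure E)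
  [IsFiniteMeasureOnCompacts μ]

theorem integrable_plateau_sq (hR : 0 < R) : Integrable (fun x : E ↦ plateau R x ^ 2) μ := by
  have h_cs : HasCompactSupport (fun x : E ↦ plateau R x ^ 2) :=
    (hasCompactSupport_plateau hR).comp_left (g := fun s : ℝ ↦ s ^ 2) (zero_pow two_ne_zero)
  exact ((lipschitzWith_plateau R).continuous.pow 2).integrable_of_hasCompactSupport h_cs

theorem measureReal_closedBall_le_integral_plateau_sq (hR : 0 < R) :
    μ.real (closedBall 0 R) ≤ ∫ x, plateau R x ^ 2 ∂μ := by
  rw [← integral_indicator_one measurableSet_closedBall]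
  refine integral_mono ((integrable_indicator_iff measurableSet_closedBall).2
    (integrableOn_const measure_closedBall_lt_top.ne)) (integrable_plateau_sq μ hR) fun x ↦ ?_
  by_cases hx : x ∈ closedBall (0 : E) R
  · rw [mem_closedBall, dist_zero_right] at hx
    simp [mem_closedBall, hx, plateau_of_norm_le hR hx]
  · simp [indicator_of_notMem hx, sq_nonneg]

theorem integral_plateau_sq_le_measureReal_closedBall (hR : 0 < R) :
    ∫ x, plateau R x ^ 2 ∂μ ≤ μ.real (closedBall (0 : E) (2 * R)) := by
  simpa using integral_le_mul_measureReal_of_le_of_nonpos (a := 1)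
    (integrable_plateau_sq μ hR) measurableSet_closedBall measure_closedBall_lt_top.ne
    (fun x _ ↦ pow_le_one₀ (plateau_nonneg R x) (plateau_le_one R x))
    (fun x hx ↦ by
      rw [mem_closedBall, dist_zero_right, not_le] at hx
      simp [plateau_of_le_norm hR hx.le])

end Plateau

section Energy

variable {E : Type*} [NormedAddCommGroup E] [InnerProductSpace ℝ E] [FiniteDimensional ℝ E]
  [MeasurableSpace E] [BorelSpace E] (μ : Measure E) [IsFiniteMeasureOnCompacts μ]
  {F : ℝ → ℝ} {u : E → ℝ}

/-- The functional `J` of the paper. -/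
def energy (F : ℝ → ℝ) (u : E → ℝ) : ℝ :=
  ∫ x, ((1:ℝ)/2 * ‖gradient u x‖ ^ 2 + F (u x) - (1:ℝ)/2 * (u x) ^ 2) ∂μ

theorem energy_le_of_lipschitzWith (hF : Continuous F) (hF0 : F 0 = 0) {K : ℝ≥0}
    (hu : LipschitzWith K u) (hcs : HasCompactSupport u) :
    energy μ F u ≤ K ^ 2 / 2 * μ.real (tsupport u) + ∫ x, (F (u x) - u x ^ 2 / 2) ∂μ := by
  have h_pot : Integrable (fun x ↦ F (u x) - u x ^ 2 / 2) μ :=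
    integrable_comp_of_hasCompactSupport (G := fun s ↦ F s - s ^ 2 / 2) (by fun_prop)
      (by simp [hF0]) hu.continuous hcs
  have h_split : energy μ F u
      = 1 / 2 * ∫ x, ‖gradient u x‖ ^ 2 ∂μ + ∫ x, (F (u x) - u x ^ 2 / 2) ∂μ := by
    rw [energy, ← integral_const_mul,
      ← integral_add ((hu.integrable_norm_gradient_sq hcs).const_mul _) h_pot]
    congr 1 with x
    ring
  linarith [hu.integral_norm_gradient_sq_le (μ := μ) hcs]

variable {R t : ℝ}

theorem energy_mul_plateau_le (hF : Continuous F) (hF0 : F 0 = 0) (hR : 0 < R) (ht : 0 ≤ t)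
    (hF_nonpos : ∀ s ∈ Icc 0 t, F s - s ^ 2 / 2 ≤ 0) :
    energy μ F (fun x ↦ t * plateau R x) ≤
      (t / R) ^ 2 / 2 * μ.real (closedBall 0 (2 * R)) +
        (F t - t ^ 2 / 2) * μ.real (closedBall 0 R) := by
  have h_lip : LipschitzWith (‖t‖₊ * ‖R⁻¹‖₊) (fun x : E ↦ t * plateau R x) :=
    (lipschitzWith_smul t).comp (lipschitzWith_plateau R)
  have h_cs : HasCompactSupport (fun x : E ↦ t * plateau R x) :=
    (hasCompactSupport_plateau hR).mul_left
  have h_const : ((‖t‖₊ * ‖R⁻¹‖₊ : ℝ≥0) : ℝ) = t / R := by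
    simp [abs_of_nonneg ht, abs_of_pos hR, div_eq_mul_inv]
  have h_supp : μ.real (tsupport fun x : E ↦ t * plateau R x) ≤ μ.real (closedBall 0 (2 * R)) :=
    measureReal_mono (tsupport_mul_subset_right.trans (tsupport_plateau_subset hR))
      measure_closedBall_lt_top.ne
  have h_pot : ∫ x, (F (t * plateau R x) - (t * plateau R x) ^ 2 / 2) ∂μ ≤
      (F t - t ^ 2 / 2) * μ.real (closedBall 0 R) := by
    refine integral_le_mul_measureReal_of_le_of_nonpos
      (integrable_comp_of_hasCompactSupport (G := fun s ↦ F s - s ^ 2 / 2) (by fun_prop)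
        (by simp [hF0]) h_lip.continuous h_cs)
      measurableSet_closedBall measure_closedBall_lt_top.ne (fun x hx ↦ ?_) (fun x _ ↦ ?_)
    · rw [mem_closedBall, dist_zero_right] at hx
      simp [plateau_of_norm_le hR hx]
    · refine hF_nonpos _ ⟨mul_nonneg ht (plateau_nonneg R x), ?_⟩
      simpa using mul_le_mul_of_nonneg_left (plateau_le_one R x) ht
  have h_energy := energy_le_of_lipschitzWith μ hF hF0 h_lip h_cs
  rw [h_const] at h_energy
  linarith [mul_le_mul_of_nonneg_left h_supp (by positivity : 0 ≤ (t / R) ^ 2 / 2)]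

end Energy

theorem tendsto_div_pow_rpow_mul_sq_atTop {c ε : ℝ} {d : ℕ} (hc : 0 < c) (hdε : d * ε < 4) :
    Tendsto (fun R : ℝ ↦ (c / R ^ d) ^ (ε / 2) * R ^ 2) atTop atTop := by
  have h_eq : ∀ R : ℝ, 0 < R →
      c ^ (ε / 2) * R ^ (2 - d * ε / 2) = (c / R ^ d) ^ (ε / 2) * R ^ 2 := by
    intro R hR
    rw [Real.div_rpow hc.le (by positivity), ← Real.rpow_natCast R d, ← Real.rpow_mul hR.le,
      Real.rpow_sub hR, Real.rpow_two]
    ring_nf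
  refine ((tendsto_rpow_atTop (show 0 < 2 - d * ε / 2 by linarith)).const_mul_atTop
    (Real.rpow_pos_of_pos hc (ε / 2))).congr' ?_
  filter_upwards [eventually_gt_atTop 0] with R hR using h_eq R hR

theorem exists_radius_of_mul_lt_four {c ε s : ℝ} {d : ℕ} (hc : 0 < c) (hs : s ≠ 0) (hd : d ≠ 0)
    (hdε : d * ε < 4) :
    ∃ R : ℝ, 0 < R ∧ c / R ^ d ≤ s ^ 2 ∧ 2 ^ d ≤ (c / (2 * R) ^ d) ^ (ε / 2) * R ^ 2 := by
  have h_small : Tendsto (fun R : ℝ ↦ c / R ^ d) atTop (𝓝 0) :=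
    tendsto_const_nhds.div_atTop (tendsto_pow_atTop hd)
  have h_large := (tendsto_div_pow_rpow_mul_sq_atTop (c := c / 2 ^ d) (by positivity)
    hdε).eventually_ge_atTop (2 ^ d)
  obtain ⟨R, hR, h_le, h_ge⟩ := ((eventually_gt_atTop 0).and
    ((h_small.eventually_lt_const (show (0 : ℝ) < s ^ 2 by positivity)).and h_large)).exists
  refine ⟨R, hR, h_le.le, ?_⟩
  rwa [mul_pow, ← div_div]

section Haar

variable {E : Type*} [NormedAddCommGroup E] [InnerProductSpace ℝ E] [FiniteDimensional ℝ E]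
  [MeasurableSpace E] [BorelSpace E] (μ : Measure E) [μ.IsAddHaarMeasure]
  {F : ℝ → ℝ} {ε s₁ ρ R t : ℝ}

theorem energy_mul_plateau_neg (hF : Continuous F) (hF0 : F 0 = 0)
    (hH : ∀ s ∈ Icc 0 s₁, F s - s ^ 2 / 2 ≤ -s ^ (2 + ε)) (hR : 0 < R) (ht : 0 < t)
    (hts₁ : t ≤ s₁) (h_scale : 2 ^ finrank ℝ E ≤ t ^ ε * R ^ 2) :
    energy μ F (fun x ↦ t * plateau R x) < 0 := by
  set d := finrank ℝ E
  set ω := μ.real (ball (0 : E) 1)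
  have hω : 0 < ω := measureReal_ball_pos μ 0 one_pos
  have h_nonpos : ∀ s ∈ Icc 0 t, F s - s ^ 2 / 2 ≤ 0 := fun s hs ↦
    (hH s ⟨hs.1, hs.2.trans hts₁⟩).trans (neg_nonpos.2 (Real.rpow_nonneg hs.1 _))
  have h_energy := energy_mul_plateau_le μ hF hF0 hR ht.le h_nonpos
  rw [Measure.addHaar_real_closedBall μ 0 (by positivity),
    Measure.addHaar_real_closedBall μ 0 hR.le] at h_energy
  have h_top := hH t ⟨ht.le, hts₁⟩
  rw [Real.rpow_add ht, Real.rpow_two] at h_top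
  have h_grad : (t / R) ^ 2 / 2 * ((2 * R) ^ d * ω) ≤ t ^ 2 * t ^ ε * (R ^ d * ω) / 2 := by
    rw [div_pow, mul_pow]
    field_simp
    have := mul_le_mul_of_nonneg_left h_scale (by positivity : 0 ≤ t ^ 2 * R ^ d * ω)
    nlinarith
  have h_pos : 0 < t ^ 2 * t ^ ε * (R ^ d * ω) := by positivity
  nlinarith [mul_le_mul_of_nonneg_right h_top (by positivity : 0 ≤ R ^ d * ω)]

theorem exists_mul_plateau_integral_sq_eq (hR : 0 < R) (hρ : 0 < ρ) :
    ∃ t > 0, ∫ x, (t * plateau R x) ^ 2 ∂μ = ρ ∧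
      ρ / μ.real (ball (0 : E) 1) / (2 * R) ^ finrank ℝ E ≤ t ^ 2 ∧
      t ^ 2 ≤ ρ / μ.real (ball (0 : E) 1) / R ^ finrank ℝ E := by
  have hω := measureReal_ball_pos μ 0 one_pos
  set C := ∫ x, plateau R x ^ 2 ∂μ
  have hC_ge : R ^ finrank ℝ E * μ.real (ball (0 : E) 1) ≤ C := by
    simpa [Measure.addHaar_real_closedBall μ 0 hR.le] using
      measureReal_closedBall_le_integral_plateau_sq μ hR
  have hC_le : C ≤ (2 * R) ^ finrank ℝ E * μ.real (ball (0 : E) 1) := by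
    simpa [Measure.addHaar_real_closedBall μ 0 (by positivity : 0 ≤ 2 * R)] using
      integral_plateau_sq_le_measureReal_closedBall μ hR
  have hC : 0 < C := lt_of_lt_of_le (by positivity) hC_ge
  have ht_sq : √(ρ / C) ^ 2 = ρ / C := Real.sq_sqrt (by positivity)
  refine ⟨√(ρ / C), Real.sqrt_pos.2 (by positivity), ?_, ?_, ?_⟩
  · simp_rw [mul_pow]
    rw [integral_const_mul, ht_sq, div_mul_cancel₀ _ hC.ne']
  · rw [ht_sq, div_div, mul_comm (μ.real _)]
    gcongr
  · rw [ht_sq, div_div, mul_comm (μ.real _)]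
    gcongr

theorem exists_nonneg_lipschitz_energy_neg (hd : finrank ℝ E ≠ 0) (hF : Continuous F)
    (hF0 : F 0 = 0) (hε : 0 ≤ ε) (hdε : finrank ℝ E * ε < 4) (hs₁ : 0 < s₁)
    (hH : ∀ s ∈ Icc 0 s₁, F s - s ^ 2 / 2 ≤ -s ^ (2 + ε)) (hρ : 0 < ρ) :
    ∃ u : E → ℝ, (∀ x, 0 ≤ u x) ∧ (∃ K, LipschitzWith K u) ∧ HasCompactSupport u ∧
      ∫ x, u x ^ 2 ∂μ = ρ ∧ energy μ F u < 0 := by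
  have hω := measureReal_ball_pos μ 0 one_pos
  obtain ⟨R, hR, h_small, h_large⟩ :=
    exists_radius_of_mul_lt_four (c := ρ / μ.real (ball (0 : E) 1)) (by positivity) hs₁.ne' hd hdε
  obtain ⟨t, ht, h_mass, ht_ge, ht_le⟩ := exists_mul_plateau_integral_sq_eq μ hR hρ
  have hts₁ : t ≤ s₁ :=
    (pow_le_pow_iff_left₀ ht.le hs₁.le two_ne_zero).1 (ht_le.trans h_small)
  have h_scale : 2 ^ finrank ℝ E ≤ t ^ ε * R ^ 2 := by
    refine h_large.trans (mul_le_mul_of_nonneg_right ?_ (sq_nonneg R))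
    calc _ ≤ (t ^ 2) ^ (ε / 2) := Real.rpow_le_rpow (by positivity) ht_ge (by linarith)
      _ = t ^ ε := by
          rw [← Real.rpow_natCast, ← Real.rpow_mul ht.le]
          ring_nf
  exact ⟨fun x ↦ t * plateau R x, fun x ↦ mul_nonneg ht.le (plateau_nonneg R x),
    ⟨_, (lipschitzWith_smul t).comp (lipschitzWith_plateau R)⟩,
    (hasCompactSupport_plateau hR).mul_left, h_mass,
    energy_mul_plateau_neg μ hF hF0 hH hR ht hts₁ h_scale⟩

end Haar

/-- Under (H1′) (`F(s) − ½s² ≤ −s^{2+ε}` for small `s ≥ 0`,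
with `0 < ε < 4/N`), for every `ρ > 0` there is a nonnegative, Lipschitz,
compactly supported `u` with `∫ u² = ρ` and `J(u) = ∫ (½|∇u|² + F(u) − ½u²) < 0`. -/
theorem exists_J_negative (N : ℕ) (hN : 2 ≤ N)
    (F : ℝ → ℝ) (hF : Continuous F) (hF0 : F 0 = 0)
    (h1' : ∃ ε s₁ : ℝ, 0 < ε ∧ ε < 4 / (N : ℝ) ∧ 0 < s₁ ∧
      ∀ s : ℝ, 0 ≤ s → s ≤ s₁ → F s - s ^ 2 / 2 ≤ -(s ^ ((2:ℝ) + ε))) :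
    ∀ ρ : ℝ, 0 < ρ →
      ∃ u : EuclideanSpace ℝ (Fin N) → ℝ,
        (∀ x, 0 ≤ u x) ∧ (∃ K : NNReal, LipschitzWith K u) ∧ HasCompactSupport u ∧
        (∫ x, (u x) ^ 2) = ρ ∧
        (∫ x, ((1:ℝ)/2 * ‖gradient u x‖ ^ 2 + F (u x) - (1:ℝ)/2 * (u x) ^ 2)) < 0 := by
  obtain ⟨ε, s₁, hε, hεN, hs₁, hH⟩ := h1'
  intro ρ hρ
  have hd : finrank ℝ (EuclideanSpace ℝ (Fin N)) = N := finrank_euclideanSpace_fin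
  have hNε : (N : ℝ) * ε < 4 := by
    rwa [lt_div_iff₀ (by positivity), mul_comm] at hεN
  exact exists_nonneg_lipschitz_energy_neg volume (by omega) hF hF0 hε.le (by rwa [hd]) hs₁
    (fun s hs ↦ hH s hs.1 hs.2) hρ
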